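/- arXiv:2511.14883 — 3 statements merged into one kernel-verified Lean document; each statement's English description precedes it below -/
import Mathlib

section
/- Let H be a Hilbert space, ρ > 0 and −∞ < a < b ≤ ∞. For every u ∈ L_{2,ρ}(a,b;H), the function I_ρu : t ↦ ∫_a^t u(s) ds again belongs to L_{2,ρ}(a,b;H) and satisfies ∫_a^b ‖∫_a^t u(s) ds‖²_H e^{−2ρt} dt ≤ (1/ρ²) ∫_a^b ‖u(t)‖²_H e^{−2ρt} dt; that is, the antiderivative operator I_ρ is a bounded linear operator on L_{2,ρ}(a,b;H) with operator norm at most 1/ρ. -/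
open MeasureTheory Set
open scoped ENNReal

private lemma expRhoDeriv {ρ : ℝ} (hρ : ρ ≠ 0) (x : ℝ) :
    HasDerivAt (fun s => Real.exp (ρ * s) / ρ) (Real.exp (ρ * x)) x := by
  have h1 : HasDerivAt (fun s : ℝ => ρ * s) ρ x := by simpa using (hasDerivAt_id x).const_mul ρ
  have h3 := h1.exp.div_const ρ
  simpa [mul_div_assoc, mul_div_cancel_right₀ _ hρ] using h3

private lemma integral_exp_Ioc_le {ρ a t : ℝ} (hρ : 0 < ρ) (h : a ≤ t) :
    ∫ s in Set.Ioc a t, Real.exp (ρ * s) ≤ Real.exp (ρ * t) / ρ := by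
  have heq : ∫ s in Set.Ioc a t, Real.exp (ρ * s)
      = Real.exp (ρ * t) / ρ - Real.exp (ρ * a) / ρ := by
    rw [← intervalIntegral.integral_of_le h]
    exact intervalIntegral.integral_eq_sub_of_hasDerivAt
      (fun x _ => expRhoDeriv hρ.ne' x)
      ((Real.continuous_exp.comp (continuous_const.mul continuous_id)).intervalIntegrable a t)
  rw [heq]
  exact sub_le_self _ (by positivity)

private lemma integral_exp_neg_Ioi' {ρ : ℝ} (hρ : 0 < ρ) (s : ℝ) :
    ∫ t in Set.Ioi s, Real.exp (-ρ * t) = Real.exp (-ρ * s) / ρ := by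
  have hderiv : ∀ x ∈ Set.Ici s, HasDerivAt (fun y => -(Real.exp (-ρ * y) / ρ))
      (Real.exp (-ρ * x)) x := by
    intro x _
    have h1 : HasDerivAt (fun y : ℝ => -ρ * y) (-ρ) x := by
      simpa using (hasDerivAt_id x).const_mul (-ρ)
    have h3 := (h1.exp.div_const ρ).neg
    have heq : -(Real.exp (-ρ * x) * -ρ / ρ) = Real.exp (-ρ * x) := by
      field_simp
    rw [← heq]
    exact h3
  have htend : Filter.Tendsto (fun y => -(Real.exp (-ρ * y) / ρ)) Filter.atTop (nhds 0) := by
    have h1 : Filter.Tendsto (fun y : ℝ => -ρ * y) Filter.atTop Filter.atBot :=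
      Filter.Tendsto.const_mul_atTop_of_neg (neg_neg_iff_pos.mpr hρ) Filter.tendsto_id
    have h2 := (Real.tendsto_exp_atBot.comp h1).div_const ρ |>.neg
    simpa using h2
  have := integral_Ioi_of_hasDerivAt_of_tendsto' hderiv (exp_neg_integrableOn_Ioi s hρ) htend
  rw [this]
  ring

set_option maxHeartbeats 1000000 in
/-- The antiderivative operator `I_ρ` is bounded on `L_{2,ρ}(a,b;H)`
with operator norm at most `1/ρ`: for `u ∈ L_{2,ρ}(a,b;H)` the primitive
`t ↦ ∫_a^t u(s) ds` again belongs to `L_{2,ρ}(a,b;H)` and its squared weighted norm is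
bounded by `(1/ρ²)` times that of `u`.  Here `b` may be `∞`, encoded as `b : EReal`. -/
theorem antiderivative_bounded_on_L2rho
    {H : Type*} [NormedAddCommGroup H] [InnerProductSpace ℝ H] [CompleteSpace H]
    (ρ : ℝ) (hρ : 0 < ρ) (a : ℝ) (b : EReal) (hab : (a : EReal) < b)
    (S : Set ℝ) (hS : S = {t : ℝ | a < t ∧ (t : EReal) < b})
    (u : ℝ → H)
    (hmeas : AEStronglyMeasurable u (volume.restrict S))
    (hu : IntegrableOn (fun t => ‖u t‖ ^ 2 * Real.exp (-2 * ρ * t)) S) :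
    IntegrableOn (fun t => ‖∫ s in Ioc a t, u s‖ ^ 2 * Real.exp (-2 * ρ * t)) S ∧
    (∫ t in S, ‖∫ s in Ioc a t, u s‖ ^ 2 * Real.exp (-2 * ρ * t))
      ≤ (1 / ρ ^ 2) * ∫ t in S, ‖u t‖ ^ 2 * Real.exp (-2 * ρ * t) := by
  have hSopen : IsOpen S := by
    have : S = Ioi a ∩ ((fun t : ℝ => (t : EReal)) ⁻¹' Iio b) := by
      rw [hS]; rfl
    rw [this]
    exact isOpen_Ioi.inter (isOpen_Iio.preimage continuous_coe_real_ereal)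
  have hSm : MeasurableSet S := hSopen.measurableSet
  have hsub : ∀ t ∈ S, Ioc a t ⊆ S := by
    rw [hS]; rintro t ht s ⟨h1, h2⟩
    exact ⟨h1, lt_of_le_of_lt (EReal.coe_le_coe_iff.mpr h2) ht.2⟩
  obtain ⟨v, hv_sm, hv_ae⟩ := hmeas
  have hvm : Measurable (fun s => ‖v s‖) := hv_sm.norm.measurable
  have huv : ∀ t ∈ S, u =ᵐ[volume.restrict (Ioc a t)] v :=
    fun t ht => ae_restrict_of_ae_restrict_of_subset (hsub t ht) hv_ae
  have hPeq : ∀ t ∈ S, (∫ s in Ioc a t, u s) = ∫ s in Ioc a t, v s :=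
    fun t ht => integral_congr_ae (huv t ht)
  have hvu2 : (fun t => ‖u t‖ ^ 2 * Real.exp (-2 * ρ * t)) =ᵐ[volume.restrict S]
      (fun t => ‖v t‖ ^ 2 * Real.exp (-2 * ρ * t)) := by
    filter_upwards [hv_ae] with x hx; rw [hx]
  have hu2 : IntegrableOn (fun t => ‖v t‖ ^ 2 * Real.exp (-2 * ρ * t)) S := hu.congr hvu2
  have hv2 : ∀ t ∈ S, IntegrableOn (fun s => ‖v s‖ ^ 2 * Real.exp (-2 * ρ * s)) (Ioc a t) :=
    fun t ht => hu2.mono_set (hsub t ht)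
  -- v is integrable on Ioc a t for t ∈ S
  have hvint : ∀ t ∈ S, IntegrableOn v (Ioc a t) := by
    intro t ht
    have hb : IntegrableOn
        (fun s => (Real.exp (2*ρ*t) * (‖v s‖^2 * Real.exp (-2*ρ*s)) + 1)/2) (Ioc a t) := by
      exact (((hv2 t ht).const_mul _).add
        (integrableOn_const measure_Ioc_lt_top.ne)).div_const 2
    refine Integrable.mono' hb hv_sm.aestronglyMeasurable.restrict ?_
    rw [ae_restrict_iff' measurableSet_Ioc]
    refine ae_of_all _ (fun s hs => ?_)
    have h1 : (1:ℝ) ≤ Real.exp (2*ρ*t) * Real.exp (-2*ρ*s) := by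
      rw [← Real.exp_add]
      refine Real.one_le_exp (by nlinarith [hs.2])
    nlinarith [sq_nonneg (‖v s‖ - 1), norm_nonneg (v s), sq_nonneg (‖v s‖),
      Real.exp_pos (2*ρ*t), Real.exp_pos (-2*ρ*s)]
  -- the weight with single exponential is integrable on Ioc a t
  have hq_int : ∀ t ∈ S, IntegrableOn (fun s => ‖v s‖^2 * Real.exp (-ρ*s)) (Ioc a t) := by
    intro t ht
    refine Integrable.mono' ((hv2 t ht).const_mul (Real.exp (ρ*t))) ?_ ?_
    · exact (((hvm.pow_const 2).mul
        (Real.measurable_exp.comp (measurable_const.mul measurable_id)))).aestronglyMeasurable.restrict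
    rw [ae_restrict_iff' measurableSet_Ioc]
    refine ae_of_all _ (fun s hs => ?_)
    have h1 : Real.exp (-ρ*s) ≤ Real.exp (ρ*t) * Real.exp (-2*ρ*s) := by
      rw [← Real.exp_add]
      exact Real.exp_le_exp.mpr (by nlinarith [hs.2])
    have h2 : |‖v s‖^2 * Real.exp (-ρ*s)| = ‖v s‖^2 * Real.exp (-ρ*s) := by
      refine abs_of_nonneg (by positivity)
    rw [Real.norm_eq_abs, h2]
    nlinarith [sq_nonneg (‖v s‖)]
  set P : ℝ → H := fun t => ∫ s in Ioc a t, v s with hPdef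
  have hPcont : ContinuousOn P S := by
    intro t0 ht0
    have ht0' := hS ▸ ht0
    obtain ⟨t1, ht01, ht1b⟩ := EReal.lt_iff_exists_real_btwn.mp ht0'.2
    have ht01' : t0 < t1 := by exact_mod_cast ht01
    have ht1S : t1 ∈ S := by rw [hS]; exact ⟨lt_trans ht0'.1 ht01', ht1b⟩
    have h_icc : IntegrableOn v (Icc a t1) := by
      rw [integrableOn_Icc_iff_integrableOn_Ioc]
      exact hvint t1 ht1S
    have hc := intervalIntegral.continuousOn_primitive (f := v) (μ := volume) h_icc
    have : ContinuousAt P t0 := by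
      refine (hc t0 ⟨le_of_lt ht0'.1, le_of_lt ht01'⟩).continuousAt ?_
      exact Icc_mem_nhds ht0'.1 ht01'
    exact this.continuousWithinAt
  -- key pointwise Cauchy-Schwarz bound
  have key : ∀ t ∈ S, ‖P t‖^2 * Real.exp (-2*ρ*t) ≤
      (ρ⁻¹ * Real.exp (-ρ*t)) * ∫ s in Ioc a t, ‖v s‖^2 * Real.exp (-ρ*s) := by
    intro t ht
    have hat : a < t := (hS ▸ ht).1
    set μt := volume.restrict (Ioc a t) with hμt
    set f : ℝ → ℝ := fun s => ‖v s‖ * Real.exp (-ρ*s/2) with hfd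
    set g : ℝ → ℝ := fun s => Real.exp (ρ*s/2) with hgd
    have hfm : AEStronglyMeasurable f μt :=
      ((hvm.mul (Real.measurable_exp.comp
        ((measurable_const.mul measurable_id).div_const 2)))).aestronglyMeasurable.restrict
    have hfsqN : ∀ s, f s ^ 2 = ‖v s‖^2 * Real.exp (-ρ*s) := by
      intro s
      rw [hfd, mul_pow, sq (Real.exp _), ← Real.exp_add,
        show -ρ*s/2 + -ρ*s/2 = -ρ*s by ring]
    have hgsqN : ∀ s, g s ^ 2 = Real.exp (ρ*s) := by
      intro s
      rw [hgd, sq, ← Real.exp_add, show ρ*s/2 + ρ*s/2 = ρ*s by ring]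
    have hfg : ∀ s, f s * g s = ‖v s‖ := by
      intro s
      rw [hfd, hgd, mul_assoc, ← Real.exp_add, show -ρ*s/2 + ρ*s/2 = 0 by ring,
        Real.exp_zero, mul_one]
    have h2eq : (2 : ℝ≥0∞) = ENNReal.ofReal (2:ℝ) := by norm_num
    have hfmem : MemLp f (ENNReal.ofReal (2:ℝ)) μt := by
      rw [← h2eq, memLp_two_iff_integrable_sq hfm]
      exact (hq_int t ht).congr (ae_of_all _ fun s => (hfsqN s).symm)
    have hgmem : MemLp g (ENNReal.ofReal (2:ℝ)) μt := by
      have hgm : AEStronglyMeasurable g μt :=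
        (Real.continuous_exp.comp (by continuity)).aestronglyMeasurable.restrict
      rw [← h2eq, memLp_two_iff_integrable_sq hgm]
      refine ((Real.continuous_exp.comp (by continuity)).integrableOn_Ioc).congr
        (ae_of_all _ fun s => (hgsqN s).symm)
    have hpq : Real.HolderConjugate 2 2 := Real.HolderConjugate.two_two
    have hCS := integral_mul_le_Lp_mul_Lq_of_nonneg hpq
      (ae_of_all _ fun s => by positivity) (ae_of_all _ fun s => by positivity) hfmem hgmem
    set A := ∫ s in Ioc a t, ‖v s‖^2 * Real.exp (-ρ*s) with hAd
    set B := ∫ s in Ioc a t, Real.exp (ρ*s) with hBd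
    have hAnn : 0 ≤ A := setIntegral_nonneg measurableSet_Ioc (fun s _ => by positivity)
    have hBnn : 0 ≤ B := setIntegral_nonneg measurableSet_Ioc (fun s _ => by positivity)
    have hBle : B ≤ Real.exp (ρ*t)/ρ := integral_exp_Ioc_le hρ hat.le
    have hrw1 : ∫ s, f s * g s ∂μt = ∫ s in Ioc a t, ‖v s‖ :=
      integral_congr_ae (ae_of_all _ fun s => hfg s)
    have hrw2 : ∫ s, f s ^ (2:ℝ) ∂μt = A := by
      refine integral_congr_ae (ae_of_all _ fun s => ?_)
      simp only [Real.rpow_two]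
      exact hfsqN s
    have hrw3 : ∫ s, g s ^ (2:ℝ) ∂μt = B := by
      refine integral_congr_ae (ae_of_all _ fun s => ?_)
      simp only [Real.rpow_two]
      exact hgsqN s
    rw [hrw1, hrw2, hrw3] at hCS
    have hPle : ‖P t‖ ≤ ∫ s in Ioc a t, ‖v s‖ := norm_integral_le_integral_norm _
    have hsq : (A ^ (1/2:ℝ) * B ^ (1/2:ℝ))^2 = A * B := by
      rw [mul_pow, ← Real.rpow_natCast (A ^ (1/2:ℝ)) 2, ← Real.rpow_natCast (B ^ (1/2:ℝ)) 2,
        ← Real.rpow_mul hAnn, ← Real.rpow_mul hBnn]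
      norm_num
    have hP2 : ‖P t‖^2 ≤ A * B := by
      rw [← hsq]
      exact pow_le_pow_left₀ (norm_nonneg _) (hPle.trans hCS) 2
    have hexp : Real.exp (ρ*t) * Real.exp (-2*ρ*t) = Real.exp (-ρ*t) := by
      rw [← Real.exp_add]; congr 1; ring
    calc ‖P t‖^2 * Real.exp (-2*ρ*t) ≤ (A*B) * Real.exp (-2*ρ*t) :=
          mul_le_mul_of_nonneg_right hP2 (Real.exp_pos _).le
      _ ≤ (A * (Real.exp (ρ*t)/ρ)) * Real.exp (-2*ρ*t) :=
          mul_le_mul_of_nonneg_right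
            (mul_le_mul_of_nonneg_left hBle hAnn) (Real.exp_pos _).le
      _ = ρ⁻¹ * (Real.exp (ρ*t) * Real.exp (-2*ρ*t)) * A := by ring
      _ = (ρ⁻¹ * Real.exp (-ρ*t)) * A := by rw [hexp]
  -- the ENNReal chain
  set gq : ℝ → ℝ≥0∞ := fun s => ENNReal.ofReal (‖v s‖^2 * Real.exp (-ρ*s)) with hgq
  have hgqm : Measurable gq :=
    ((hvm.pow_const 2).mul
      (Real.measurable_exp.comp (measurable_const.mul measurable_id))).ennreal_ofReal
  set c : ℝ → ℝ≥0∞ := fun t => ENNReal.ofReal (ρ⁻¹ * Real.exp (-ρ*t)) with hc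
  have hcm : Measurable c :=
    (measurable_const.mul (Real.measurable_exp.comp (measurable_const.mul measurable_id))).ennreal_ofReal
  set B0 : ℝ≥0∞ := ∫⁻ s in S, ENNReal.ofReal (‖v s‖^2 * Real.exp (-2*ρ*s)) with hB0
  have hB0fin : B0 = ENNReal.ofReal (∫ s in S, ‖v s‖^2 * Real.exp (-2*ρ*s)) := by
    rw [hB0, ← ofReal_integral_eq_lintegral_ofReal hu2 (ae_of_all _ (fun s => by positivity))]
  set A0 : ℝ≥0∞ := ∫⁻ t in S, ENNReal.ofReal (‖P t‖^2 * Real.exp (-2*ρ*t)) with hA0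
  have main : A0 ≤ ENNReal.ofReal (ρ⁻¹ * ρ⁻¹) * B0 := by
    set T : Set (ℝ×ℝ) := {p | a < p.2 ∧ p.2 ≤ p.1} with hT
    have hTm : MeasurableSet T :=
      (measurableSet_lt measurable_const measurable_snd).inter
        (measurableSet_le measurable_snd measurable_fst)
    set Φ : ℝ × ℝ → ℝ≥0∞ := T.indicator (fun p => c p.1 * gq p.2) with hΦ
    have hΦm : Measurable Φ :=
      ((hcm.comp measurable_fst).mul (hgqm.comp measurable_snd)).indicator hTm
    have step1 : A0 ≤ ∫⁻ t in S, ∫⁻ s, Φ (t, s) := by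
      rw [hA0]
      refine lintegral_mono_ae ?_
      rw [ae_restrict_iff' hSm]
      refine ae_of_all _ (fun t ht => ?_)
      have h1 : ENNReal.ofReal (‖P t‖^2 * Real.exp (-2*ρ*t)) ≤
          c t * ENNReal.ofReal (∫ s in Ioc a t, ‖v s‖^2 * Real.exp (-ρ*s)) := by
        rw [hc, ← ENNReal.ofReal_mul (by positivity)]
        exact ENNReal.ofReal_le_ofReal (key t ht)
      refine h1.trans (le_of_eq ?_)
      rw [ofReal_integral_eq_lintegral_ofReal (hq_int t ht)
        (ae_of_all _ fun s => by positivity)]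
      have h2 : ∀ s, Φ (t, s) = (Ioc a t).indicator (fun s => c t * gq s) s := by
        intro s
        by_cases hs : s ∈ Ioc a t
        · have hts : (t, s) ∈ T := ⟨hs.1, hs.2⟩
          rw [hΦ, Set.indicator_of_mem hts, Set.indicator_of_mem hs]
        · have hts : (t, s) ∉ T := fun h => hs ⟨h.1, h.2⟩
          rw [hΦ, Set.indicator_of_notMem hts, Set.indicator_of_notMem hs]
      rw [lintegral_congr h2, lintegral_indicator measurableSet_Ioc,
        lintegral_const_mul' _ _ ENNReal.ofReal_ne_top]
    have step2 : ∫⁻ t in S, ∫⁻ s, Φ (t, s) = ∫⁻ s, ∫⁻ t in S, Φ (t, s) := by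
      refine lintegral_lintegral_swap ?_
      exact (hΦm.comp (measurable_fst.prodMk measurable_snd)).aemeasurable
    have hIci : ∀ s : ℝ, (∫⁻ t in Ici s, c t)
        = ENNReal.ofReal (ρ⁻¹ * (Real.exp (-ρ*s)/ρ)) := by
      intro s
      have hint : IntegrableOn (fun t => ρ⁻¹ * Real.exp (-ρ*t)) (Ici s) := by
        rw [integrableOn_Ici_iff_integrableOn_Ioi]
        exact (exp_neg_integrableOn_Ioi s hρ).const_mul _
      rw [hc, ← ofReal_integral_eq_lintegral_ofReal hint
        (ae_of_all _ fun t => by positivity)]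
      congr 1
      rw [integral_Ici_eq_integral_Ioi, integral_const_mul,
        integral_exp_neg_Ioi' hρ s]
    have step3 : ∀ s : ℝ, (∫⁻ t in S, Φ (t, s)) ≤
        S.indicator (fun s => gq s * ENNReal.ofReal (ρ⁻¹ * (Real.exp (-ρ*s)/ρ))) s := by
      intro s
      by_cases hsS : s ∈ S
      · rw [Set.indicator_of_mem hsS]
        have hb1 : ∀ t, Φ (t, s) ≤ (Ici s).indicator (fun t => c t * gq s) t := by
          intro t
          by_cases ht : (t, s) ∈ T
          · have hts : t ∈ Ici s := ht.2
            rw [hΦ, Set.indicator_of_mem ht, Set.indicator_of_mem hts]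
          · rw [hΦ, Set.indicator_of_notMem ht]; exact zero_le
        calc (∫⁻ t in S, Φ (t, s))
            ≤ ∫⁻ t in S, (Ici s).indicator (fun t => c t * gq s) t := lintegral_mono hb1
          _ ≤ ∫⁻ t, (Ici s).indicator (fun t => c t * gq s) t :=
              setLIntegral_le_lintegral _ _
          _ = ∫⁻ t in Ici s, c t * gq s := lintegral_indicator measurableSet_Ici _
          _ = (∫⁻ t in Ici s, c t) * gq s :=
              lintegral_mul_const' _ _ ENNReal.ofReal_ne_top
          _ = gq s * ENNReal.ofReal (ρ⁻¹ * (Real.exp (-ρ*s)/ρ)) := by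
              rw [hIci s, mul_comm]
      · rw [Set.indicator_of_notMem hsS]
        have hz : ∀ t ∈ S, Φ (t, s) = 0 := by
          intro t ht
          rw [hΦ, Set.indicator_of_notMem]
          intro hmem
          exact hsS (hsub t ht ⟨hmem.1, hmem.2⟩)
        rw [setLIntegral_congr_fun hSm hz]
        simp
    have step4 : (∫⁻ s, S.indicator
          (fun s => gq s * ENNReal.ofReal (ρ⁻¹ * (Real.exp (-ρ*s)/ρ))) s)
        = ENNReal.ofReal (ρ⁻¹ * ρ⁻¹) * B0 := by
      rw [lintegral_indicator hSm, hB0,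
        ← lintegral_const_mul' _ _ ENNReal.ofReal_ne_top]
      refine lintegral_congr fun s => ?_
      rw [hgq]
      rw [← ENNReal.ofReal_mul (by positivity), ← ENNReal.ofReal_mul (by positivity)]
      congr 1
      have hexp : Real.exp (-ρ*s) * Real.exp (-ρ*s) = Real.exp (-2*ρ*s) := by
        rw [← Real.exp_add]; congr 1; ring
      rw [show (‖v s‖^2 * Real.exp (-ρ*s)) * (ρ⁻¹*(Real.exp (-ρ*s)/ρ))
        = ρ⁻¹*ρ⁻¹*(‖v s‖^2 * (Real.exp (-ρ*s) * Real.exp (-ρ*s))) by ring, hexp]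
    calc A0 ≤ ∫⁻ t in S, ∫⁻ s, Φ (t, s) := step1
      _ = ∫⁻ s, ∫⁻ t in S, Φ (t, s) := step2
      _ ≤ ∫⁻ s, S.indicator
            (fun s => gq s * ENNReal.ofReal (ρ⁻¹ * (Real.exp (-ρ*s)/ρ))) s :=
          lintegral_mono step3
      _ = ENNReal.ofReal (ρ⁻¹ * ρ⁻¹) * B0 := step4
  have hB0top : B0 ≠ ⊤ := by rw [hB0fin]; exact ENNReal.ofReal_ne_top
  have hA0top : A0 ≠ ⊤ :=
    ne_top_of_le_ne_top (ENNReal.mul_ne_top ENNReal.ofReal_ne_top hB0top) main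
  -- measurability of the target (with v)
  have hPm : AEStronglyMeasurable (fun t => ‖P t‖^2 * Real.exp (-2*ρ*t)) (volume.restrict S) := by
    have h1 : AEStronglyMeasurable P (volume.restrict S) := hPcont.aestronglyMeasurable hSm
    have h2 : AEMeasurable (fun t => ‖P t‖^2) (volume.restrict S) :=
      h1.norm.aemeasurable.pow_const 2
    have h3 : AEMeasurable (fun t => Real.exp (-2*ρ*t)) (volume.restrict S) :=
      (Real.measurable_exp.comp (measurable_const.mul measurable_id)).aemeasurable
    exact (h2.mul h3).aestronglyMeasurable
  have hPint : IntegrableOn (fun t => ‖P t‖^2 * Real.exp (-2*ρ*t)) S := by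
    refine ⟨hPm, ?_⟩
    rw [hasFiniteIntegral_iff_ofReal (ae_of_all _ (fun t => by positivity))]
    exact hA0top.lt_top
  have htarget : (fun t => ‖∫ s in Ioc a t, u s‖^2 * Real.exp (-2*ρ*t)) =ᵐ[volume.restrict S]
      (fun t => ‖P t‖^2 * Real.exp (-2*ρ*t)) := by
    rw [Filter.EventuallyEq, ae_restrict_iff' hSm]
    refine ae_of_all _ (fun t ht => ?_)
    show ‖∫ s in Ioc a t, u s‖^2 * Real.exp (-2*ρ*t) = ‖P t‖^2 * Real.exp (-2*ρ*t)
    rw [hPeq t ht]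
  constructor
  · exact hPint.congr htarget.symm
  · have hL : (∫ t in S, ‖∫ s in Ioc a t, u s‖^2 * Real.exp (-2*ρ*t))
        = ∫ t in S, ‖P t‖^2 * Real.exp (-2*ρ*t) := integral_congr_ae htarget
    have hR : (∫ t in S, ‖u t‖^2 * Real.exp (-2*ρ*t))
        = ∫ t in S, ‖v t‖^2 * Real.exp (-2*ρ*t) := integral_congr_ae hvu2
    rw [hL, hR]
    have hLlint : (∫ t in S, ‖P t‖^2 * Real.exp (-2*ρ*t)) = A0.toReal := by
      rw [hA0, integral_eq_lintegral_of_nonneg_ae (ae_of_all _ fun t => by positivity) hPm]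
    have hRlint : (∫ t in S, ‖v t‖^2 * Real.exp (-2*ρ*t)) = B0.toReal := by
      rw [hB0fin, ENNReal.toReal_ofReal]
      exact setIntegral_nonneg hSm fun t _ => by positivity
    rw [hLlint, hRlint]
    have hmono := ENNReal.toReal_mono (ENNReal.mul_ne_top ENNReal.ofReal_ne_top hB0top) main
    rw [ENNReal.toReal_mul, ENNReal.toReal_ofReal (by positivity)] at hmono
    calc A0.toReal ≤ ρ⁻¹*ρ⁻¹ * B0.toReal := hmono
      _ = (1/ρ^2) * B0.toReal := by
          rw [show ρ⁻¹*ρ⁻¹ = 1/ρ^2 by rw [one_div, pow_two, mul_inv]]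
end

section
/- Let H be a Hilbert space, ρ > 0 and −∞ < a < b ≤ ∞. For every v ∈ L_{2,ρ}(a,b;H), the function I_ρv : t ↦ ∫_a^t v(s) ds belongs to H¹_ρ(a,b;H), its distributional derivative equals v, and ‖I_ρv‖²_{H¹_ρ} = ‖I_ρv‖²_{2,ρ} + ‖v‖²_{2,ρ} ≤ (1/ρ² + 1) ‖v‖²_{2,ρ}; that is, I_ρ : L_{2,ρ}(a,b;H) → H¹_ρ(a,b;H) is bounded with operator norm at most √(1/ρ² + 1). -/
open MeasureTheory Set Filter
open scoped ENNReal NNReal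

lemma expIntegralIoi (ρ s : ℝ) (hρ : 0 < ρ) :
    ∫ t in Ioi s, Real.exp (-ρ * t) = Real.exp (-ρ * s) / ρ := by
  have hderiv : ∀ x ∈ Ioi s, HasDerivAt (fun t => -(Real.exp (-ρ * t)) / ρ)
      (Real.exp (-ρ * x)) x := by
    intro x _
    have h1 : HasDerivAt (fun t : ℝ => -ρ * t) (-ρ) x := by
      simpa using (hasDerivAt_id x).const_mul (-ρ)
    have h2 := (Real.hasDerivAt_exp (-ρ * x)).comp x h1
    have h3 := (h2.neg).div_const ρ
    refine h3.congr_deriv ?_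
    field_simp
  have hint : IntegrableOn (fun t => Real.exp (-ρ * t)) (Ioi s) := exp_neg_integrableOn_Ioi s hρ
  have hmul : Tendsto (fun t : ℝ => -ρ * t) atTop atBot := by
    have h1 : Tendsto (fun t : ℝ => ρ * t) atTop atTop :=
      Tendsto.const_mul_atTop hρ tendsto_id
    have := tendsto_neg_atTop_atBot.comp h1
    exact this.congr fun t => by simp [Function.comp, neg_mul]
  have hlim : Tendsto (fun t => -(Real.exp (-ρ * t)) / ρ) atTop (nhds 0) := by
    have h2 : Tendsto (fun t : ℝ => Real.exp (-ρ * t)) atTop (nhds 0) :=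
      Real.tendsto_exp_atBot.comp hmul
    have := (h2.neg).div_const ρ
    simpa using this
  have hcont : ContinuousWithinAt (fun t => -(Real.exp (-ρ * t)) / ρ) (Ici s) s := by
    apply Continuous.continuousWithinAt
    fun_prop
  have := integral_Ioi_of_hasDerivAt_of_tendsto hcont hderiv hint hlim
  rw [this]
  ring

lemma lintegral_sq_cs {α : Type*} [MeasurableSpace α] (μ : Measure α) {f g : α → ℝ≥0∞}
    (hf : AEMeasurable f μ) (hg : AEMeasurable g μ) :
    (∫⁻ x, f x * g x ∂μ) ^ 2 ≤ (∫⁻ x, f x ^ 2 ∂μ) * (∫⁻ x, g x ^ 2 ∂μ) := by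
  have hpq : Real.HolderConjugate 2 2 := Real.HolderConjugate.two_two
  have h := ENNReal.lintegral_mul_le_Lp_mul_Lq μ hpq hf hg
  calc (∫⁻ x, f x * g x ∂μ) ^ 2 = (∫⁻ x, (f * g) x ∂μ) ^ 2 := rfl
    _ ≤ ((∫⁻ a, f a ^ (2:ℝ) ∂μ) ^ (1/(2:ℝ)) * (∫⁻ a, g a ^ (2:ℝ) ∂μ) ^ (1/(2:ℝ))) ^ 2 := by
        exact pow_le_pow_left₀ (zero_le) h 2
    _ = (∫⁻ x, f x ^ 2 ∂μ) * (∫⁻ x, g x ^ 2 ∂μ) := by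
        rw [mul_pow, ← ENNReal.rpow_natCast (_ ^ (1/(2:ℝ))) 2, ← ENNReal.rpow_natCast (_ ^ (1/(2:ℝ))) 2,
          ← ENNReal.rpow_mul, ← ENNReal.rpow_mul]
        norm_num

/-- For `v ∈ L_{2,ρ}(a,b;H)` the primitive `I_ρ v : t ↦ ∫_a^t v(s) ds`
belongs to `H¹_ρ(a,b;H)`, its distributional derivative equals `v`, and
`‖I_ρ v‖²_{H¹_ρ} = ‖I_ρ v‖²_{2,ρ} + ‖v‖²_{2,ρ} ≤ (1/ρ² + 1)‖v‖²_{2,ρ}`;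
i.e. `I_ρ : L_{2,ρ} → H¹_ρ` is bounded with norm at most `√(1/ρ² + 1)`.
Here `b` may be `∞`, encoded as `b : EReal`. -/
theorem antiderivative_bounded_into_H1rho
    {H : Type*} [NormedAddCommGroup H] [InnerProductSpace ℝ H] [CompleteSpace H]
    (ρ : ℝ) (hρ : 0 < ρ) (a : ℝ) (b : EReal) (hab : (a : EReal) < b)
    (S : Set ℝ) (hS : S = {t : ℝ | a < t ∧ (t : EReal) < b})
    (v : ℝ → H)
    (hmeas : AEStronglyMeasurable v (volume.restrict S))
    (hv : IntegrableOn (fun t => ‖v t‖ ^ 2 * Real.exp (-2 * ρ * t)) S) :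
    -- `I_ρ v ∈ L_{2,ρ}(a,b;H)`
    IntegrableOn (fun t => ‖∫ s in Ioc a t, v s‖ ^ 2 * Real.exp (-2 * ρ * t)) S ∧
    -- the distributional derivative of `I_ρ v` on `(a,b)` is `v`
    (∀ φ : ℝ → ℝ, ContDiff ℝ (⊤ : ℕ∞) φ → HasCompactSupport φ → tsupport φ ⊆ S →
      ∫ t in S, deriv φ t • (∫ s in Ioc a t, v s) = - ∫ t in S, φ t • v t) ∧
    -- the norm bound `‖I_ρ v‖²_{2,ρ} + ‖v‖²_{2,ρ} ≤ (1/ρ² + 1)‖v‖²_{2,ρ}`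
    (∫ t in S, ‖∫ s in Ioc a t, v s‖ ^ 2 * Real.exp (-2 * ρ * t))
        + (∫ t in S, ‖v t‖ ^ 2 * Real.exp (-2 * ρ * t))
      ≤ (1 / ρ ^ 2 + 1) * ∫ t in S, ‖v t‖ ^ 2 * Real.exp (-2 * ρ * t) := by
  -- basic properties of S
  have hSopen : IsOpen S := by
    rw [hS]
    have : {t : ℝ | a < t ∧ (t : EReal) < b}
        = Ioi a ∩ ((↑) : ℝ → EReal) ⁻¹' (Iio b) := rfl
    rw [this]
    exact isOpen_Ioi.inter (isOpen_Iio.preimage continuous_coe_real_ereal)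
  have hSmeas : MeasurableSet S := hSopen.measurableSet
  have hSsub : ∀ t ∈ S, a < t := fun t ht => by rw [hS] at ht; exact ht.1
  have hinter : ∀ t ∈ S, S ∩ Iic t = Ioc a t := by
    intro t ht
    rw [hS] at ht ⊢
    ext s
    constructor
    · rintro ⟨hs, hst⟩
      exact ⟨hs.1, hst⟩
    · rintro ⟨has, hst⟩
      exact ⟨⟨has, lt_of_le_of_lt (EReal.coe_le_coe_iff.2 hst) ht.2⟩, hst⟩
  have hconv : ∀ t ∈ S, Ioc a t ⊆ S := by
    intro t ht
    rw [← hinter t ht]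
    exact inter_subset_left
  clear hS hab
  -- a strongly measurable representative
  obtain ⟨w, hw_sm, hw_ae⟩ : ∃ w : ℝ → H, StronglyMeasurable w ∧ v =ᵐ[volume.restrict S] w :=
    ⟨hmeas.mk v, hmeas.stronglyMeasurable_mk, hmeas.ae_eq_mk⟩
  have hw_int_sq : IntegrableOn (fun s => ‖w s‖ ^ 2 * Real.exp (-2 * ρ * s)) S := by
    refine hv.congr ?_
    filter_upwards [hw_ae] with s hs
    rw [hs]
  -- local integrability with continuous weights
  have key : ∀ c : ℝ → ℝ, Continuous c → ∀ t ∈ S,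
      IntegrableOn (fun s => ‖w s‖ ^ 2 * c s) (Ioc a t) := by
    intro c hc t ht
    obtain ⟨C, hC⟩ := (IsCompact.exists_bound_of_continuousOn (isCompact_Icc (a := a) (b := t))
      ((hc.mul (Real.continuous_exp.comp (by fun_prop))).continuousOn
        (s := Icc a t) : ContinuousOn (fun s => c s * Real.exp (2 * ρ * s)) (Icc a t)))
    refine Integrable.mono' (((hw_int_sq.mono_set (hconv t ht))).const_mul C) ?_ ?_
    · exact ((hw_sm.norm.measurable.pow_const 2).mul hc.measurable).aestronglyMeasurable
    · filter_upwards [ae_restrict_mem measurableSet_Ioc] with s hs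
      have h1 : ‖w s‖ ^ 2 * c s
          = (‖w s‖ ^ 2 * Real.exp (-2 * ρ * s)) * (c s * Real.exp (2 * ρ * s)) := by
        rw [mul_mul_mul_comm, ← Real.exp_add]
        ring_nf
        simp
      have h2 : c s * Real.exp (2 * ρ * s) ≤ C := by
        calc c s * Real.exp (2 * ρ * s) ≤ ‖c s * Real.exp (2 * ρ * s)‖ := le_abs_self _
          _ ≤ C := hC s (Ioc_subset_Icc_self hs)
      have h3 : (0:ℝ) ≤ ‖w s‖ ^ 2 * Real.exp (-2 * ρ * s) := by positivity
      rw [Real.norm_eq_abs, h1, abs_mul, abs_of_nonneg h3, mul_comm C]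
      refine mul_le_mul_of_nonneg_left ?_ h3
      calc |c s * Real.exp (2 * ρ * s)| = ‖c s * Real.exp (2 * ρ * s)‖ := rfl
        _ ≤ C := by simpa using hC s (Ioc_subset_Icc_self hs)
  have hL2loc : ∀ t ∈ S, IntegrableOn (fun s => ‖w s‖ ^ 2) (Ioc a t) := by
    intro t ht
    simpa using key (fun _ => 1) continuous_const t ht
  have hL1loc : ∀ t ∈ S, IntegrableOn w (Ioc a t) := by
    intro t ht
    haveI : IsFiniteMeasure (volume.restrict (Ioc a t)) := by
      constructor
      rw [Measure.restrict_apply_univ, Real.volume_Ioc]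
      exact ENNReal.ofReal_lt_top
    refine MemLp.integrable one_le_two ?_
    exact (memLp_two_iff_integrable_sq_norm
      (hw_sm.aestronglyMeasurable.restrict)).mpr (hL2loc t ht)
  -- the primitive and its continuity
  set F : ℝ → H := fun t => ∫ s in Ioc a t, w s with hF
  have hFcongr : ∀ t ∈ S, (∫ s in Ioc a t, v s) = F t := by
    intro t ht
    exact integral_congr_ae (ae_restrict_of_ae_restrict_of_subset (hconv t ht) hw_ae)
  have hFcont : ContinuousOn F S := by
    intro t0 ht0
    obtain ⟨ε, hε, hball⟩ := Metric.isOpen_iff.1 hSopen t0 ht0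
    have ht1S : t0 + ε / 2 ∈ S := by
      apply hball
      rw [Metric.mem_ball, Real.dist_eq, show t0 + ε / 2 - t0 = ε / 2 by ring,
        abs_of_nonneg (by linarith)]
      linarith
    have hicc : IntegrableOn w (Icc a (t0 + ε / 2)) := by
      rw [integrableOn_Icc_iff_integrableOn_Ioc]
      exact hL1loc _ ht1S
    have hcont := intervalIntegral.continuousOn_primitive (f := w) (μ := volume) hicc
    have hmem : Icc a (t0 + ε / 2) ∈ nhds t0 :=
      Icc_mem_nhds (hSsub t0 ht0) (by linarith)
    exact ((hcont.continuousAt hmem).continuousWithinAt)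
  have hFmeas : AEStronglyMeasurable F (volume.restrict S) :=
    hFcont.aestronglyMeasurable hSmeas
  -- the pointwise (Cauchy-Schwarz) bound
  have hA : ∀ t ∈ S, ‖F t‖ ^ 2 * Real.exp (-2 * ρ * t)
      ≤ (1 / ρ) * (Real.exp (-ρ * t) * ∫ s in Ioc a t, ‖w s‖ ^ 2 * Real.exp (-ρ * s)) := by
    intro t ht
    have hat : a < t := hSsub t ht
    set X : ℝ := ∫ s in Ioc a t, ‖w s‖ ^ 2 * Real.exp (-ρ * s) with hX
    have hXnn : 0 ≤ X := integral_nonneg fun s => by positivity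
    set f : ℝ → ℝ := fun s => ‖w s‖ * Real.exp (-(ρ / 2) * s) with hfdef
    set g : ℝ → ℝ := fun s => Real.exp ((ρ / 2) * s) with hgdef
    have hfsq : ∀ s, f s ^ 2 = ‖w s‖ ^ 2 * Real.exp (-ρ * s) := by
      intro s
      rw [hfdef]
      simp only [mul_pow, sq (Real.exp _), ← Real.exp_add]
      congr 2
      ring
    have hgsq : ∀ s, g s ^ 2 = Real.exp (ρ * s) := by
      intro s
      rw [hgdef]
      simp only [sq (Real.exp _), ← Real.exp_add]
      congr 1
      ring
    have hfint : IntegrableOn (fun s => f s ^ 2) (Ioc a t) := by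
      simp only [hfsq]
      exact key _ (by fun_prop) t ht
    have hgint : IntegrableOn (fun s => g s ^ 2) (Ioc a t) := by
      apply Continuous.integrableOn_Ioc
      fun_prop
    have hmf : MemLp f (ENNReal.ofReal 2) (volume.restrict (Ioc a t)) := by
      rw [show ENNReal.ofReal 2 = 2 by norm_num]
      refine (memLp_two_iff_integrable_sq_norm ?_).mpr ?_
      · exact ((hw_sm.norm.measurable.mul (by fun_prop)).aestronglyMeasurable)
      · refine hfint.congr ?_
        filter_upwards with s
        rw [Real.norm_eq_abs, sq_abs]
    have hmg : MemLp g (ENNReal.ofReal 2) (volume.restrict (Ioc a t)) := by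
      rw [show ENNReal.ofReal 2 = 2 by norm_num]
      refine (memLp_two_iff_integrable_sq_norm ?_).mpr ?_
      · exact (Continuous.aestronglyMeasurable (by fun_prop))
      · refine hgint.congr ?_
        filter_upwards with s
        rw [Real.norm_eq_abs, sq_abs]
    have hpq : Real.HolderConjugate 2 2 := Real.HolderConjugate.two_two
    have hcs := integral_mul_le_Lp_mul_Lq_of_nonneg hpq
      (Filter.Eventually.of_forall fun s => by positivity)
      (Filter.Eventually.of_forall fun s => (Real.exp_pos _).le) hmf hmg
    have hrpow : ∀ u : ℝ → ℝ, (∫ s in Ioc a t, u s ^ (2:ℝ)) = ∫ s in Ioc a t, u s ^ 2 := by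
      intro u
      refine integral_congr_ae (Filter.Eventually.of_forall fun s => ?_)
      simpa using Real.rpow_natCast (u s) 2
    rw [hrpow f, hrpow g] at hcs
    have hfg : ∀ s, f s * g s = ‖w s‖ := by
      intro s
      rw [hfdef, hgdef]
      simp only [mul_assoc, ← Real.exp_add]
      rw [show -(ρ / 2) * s + ρ / 2 * s = 0 by ring, Real.exp_zero, mul_one]
    have hnorm : ‖F t‖ ≤ ∫ s in Ioc a t, f s * g s := by
      simp only [hfg]
      exact norm_integral_le_integral_norm _
    set Y : ℝ := ∫ s in Ioc a t, g s ^ 2 with hY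
    have hYnn : 0 ≤ Y := integral_nonneg fun s => by positivity
    have hXf : (∫ s in Ioc a t, f s ^ 2) = X := by
      rw [hX]
      exact integral_congr_ae (Filter.Eventually.of_forall fun s => hfsq s)
    have hsq : ‖F t‖ ^ 2 ≤ X * Y := by
      calc ‖F t‖ ^ 2 ≤ (∫ s in Ioc a t, f s * g s) ^ 2 :=
            pow_le_pow_left₀ (norm_nonneg _) hnorm 2
        _ ≤ ((∫ s in Ioc a t, f s ^ 2) ^ ((1:ℝ)/2) * Y ^ ((1:ℝ)/2)) ^ 2 := by
            refine pow_le_pow_left₀ ?_ hcs 2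
            exact integral_nonneg fun s => mul_nonneg (by positivity) (by positivity)
        _ = (∫ s in Ioc a t, f s ^ 2) * Y := by
            rw [mul_pow, ← Real.rpow_natCast (_ ^ ((1:ℝ)/2)) 2, ← Real.rpow_natCast (Y ^ ((1:ℝ)/2)) 2,
              ← Real.rpow_mul (integral_nonneg fun s => by positivity),
              ← Real.rpow_mul hYnn]
            norm_num
        _ = X * Y := by rw [hXf]
    have hYle : Y ≤ Real.exp (ρ * t) / ρ := by
      have hder : ∀ x ∈ uIcc a t, HasDerivAt (fun s => Real.exp (ρ * s) / ρ)
          (Real.exp (ρ * x)) x := by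
        intro x _
        have h1 : HasDerivAt (fun s : ℝ => ρ * s) ρ x := by
          simpa using (hasDerivAt_id x).const_mul ρ
        have h2 := ((Real.hasDerivAt_exp (ρ * x)).comp x h1).div_const ρ
        refine h2.congr_deriv ?_
        field_simp
      have hii : IntervalIntegrable (fun s => Real.exp (ρ * s)) volume a t :=
        (Continuous.intervalIntegrable (by fun_prop) _ _)
      have := intervalIntegral.integral_eq_sub_of_hasDerivAt hder hii
      rw [hY]
      calc (∫ s in Ioc a t, g s ^ 2) = ∫ s in Ioc a t, Real.exp (ρ * s) :=
            integral_congr_ae (Filter.Eventually.of_forall fun s => hgsq s)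
        _ = ∫ s in a..t, Real.exp (ρ * s) := (intervalIntegral.integral_of_le hat.le).symm
        _ = Real.exp (ρ * t) / ρ - Real.exp (ρ * a) / ρ := this
        _ ≤ Real.exp (ρ * t) / ρ := by
            have : 0 < Real.exp (ρ * a) / ρ := by positivity
            linarith
    have hXY : ‖F t‖ ^ 2 ≤ X * (Real.exp (ρ * t) / ρ) :=
      hsq.trans (mul_le_mul_of_nonneg_left hYle hXnn)
    have hexp : Real.exp (ρ * t) * Real.exp (-2 * ρ * t) = Real.exp (-ρ * t) := by
      rw [← Real.exp_add]
      congr 1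
      ring
    calc ‖F t‖ ^ 2 * Real.exp (-2 * ρ * t)
        ≤ X * (Real.exp (ρ * t) / ρ) * Real.exp (-2 * ρ * t) :=
          mul_le_mul_of_nonneg_right hXY (Real.exp_pos _).le
      _ = X * (Real.exp (ρ * t) * Real.exp (-2 * ρ * t)) * (1 / ρ) := by ring
      _ = (1 / ρ) * (Real.exp (-ρ * t) * X) := by rw [hexp]; ring
  -- Tonelli
  set c : ℝ → ℝ≥0∞ := fun s => ENNReal.ofReal (‖w s‖ ^ 2 * Real.exp (-ρ * s)) with hc
  set J : ℝ≥0∞ := ∫⁻ s in S, ENNReal.ofReal (‖w s‖ ^ 2 * Real.exp (-2 * ρ * s)) with hJ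
  have hTon : (∫⁻ t in S, ENNReal.ofReal
        (Real.exp (-ρ * t) * ∫ s in Ioc a t, ‖w s‖ ^ 2 * Real.exp (-ρ * s)))
      ≤ ENNReal.ofReal (1 / ρ) * J := by
    have hcmeas : Measurable c := by
      apply Measurable.ennreal_ofReal
      exact (hw_sm.norm.measurable.pow_const 2).mul (by fun_prop)
    set k : ℝ → ℝ → ℝ≥0∞ := fun t s =>
      (Iic t).indicator (fun s' => ENNReal.ofReal (Real.exp (-ρ * t)) * c s') s with hk
    have hstep1 : ∀ t ∈ S, ENNReal.ofReal
        (Real.exp (-ρ * t) * ∫ s in Ioc a t, ‖w s‖ ^ 2 * Real.exp (-ρ * s))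
        = ∫⁻ s in S, k t s := by
      intro t ht
      rw [ENNReal.ofReal_mul (Real.exp_pos _).le,
        ofReal_integral_eq_lintegral_ofReal (key _ (by fun_prop) t ht)
          (Filter.Eventually.of_forall fun s => by positivity)]
      rw [hk]
      simp only
      rw [lintegral_indicator measurableSet_Iic, Measure.restrict_restrict measurableSet_Iic,
        inter_comm (Iic t) S, hinter t ht,
        lintegral_const_mul' _ _ ENNReal.ofReal_ne_top]
    have hkmeas : AEMeasurable (Function.uncurry k)
        ((volume.restrict S).prod (volume.restrict S)) := by
      have huncurry : Function.uncurry k = fun p : ℝ × ℝ =>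
          ({q : ℝ × ℝ | q.2 ≤ q.1}).indicator
            (fun q => ENNReal.ofReal (Real.exp (-ρ * q.1)) * c q.2) p := by
        funext p
        rcases p with ⟨t, s⟩
        simp only [Function.uncurry, hk]
        by_cases h : s ≤ t
        · rw [indicator_of_mem (mem_Iic.mpr h), indicator_of_mem (by exact h)]
        · rw [indicator_of_notMem (by simpa using h), indicator_of_notMem (by simpa using h)]
      rw [huncurry]
      refine Measurable.aemeasurable (Measurable.indicator ?_ ?_)
      · have m1 : Measurable fun p : ℝ × ℝ => ENNReal.ofReal (Real.exp (-ρ * p.1)) := by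
          apply Measurable.ennreal_ofReal
          fun_prop
        exact m1.mul (hcmeas.comp measurable_snd)
      · exact measurableSet_le measurable_snd measurable_fst
    have hinner : ∀ s ∈ S, (∫⁻ t in S, k t s)
        ≤ ENNReal.ofReal (1 / ρ) * ENNReal.ofReal (‖w s‖ ^ 2 * Real.exp (-2 * ρ * s)) := by
      intro s hs
      have h1 : ∀ t' : ℝ, k t' s
          = (Ici s).indicator (fun t'' => ENNReal.ofReal (Real.exp (-ρ * t''))) t' * c s := by
        intro t'
        rw [hk]
        simp only
        by_cases h : s ≤ t'
        · rw [indicator_of_mem (mem_Iic.mpr h), indicator_of_mem (mem_Ici.mpr h), mul_comm]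
        · rw [indicator_of_notMem (by simpa using h), indicator_of_notMem (by simpa using h),
            zero_mul]
      have hexpint : IntegrableOn (fun t' => Real.exp (-ρ * t')) (Ici s) := by
        rw [integrableOn_Ici_iff_integrableOn_Ioi]
        exact exp_neg_integrableOn_Ioi s hρ
      calc (∫⁻ t' in S, k t' s)
          = ∫⁻ t' in S, (Ici s).indicator (fun t'' => ENNReal.ofReal (Real.exp (-ρ * t''))) t' * c s := by
            exact lintegral_congr fun t' => by rw [h1 t']
        _ = (∫⁻ t' in S, (Ici s).indicator (fun t'' => ENNReal.ofReal (Real.exp (-ρ * t''))) t') * c s :=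
            lintegral_mul_const' _ _ ENNReal.ofReal_ne_top
        _ ≤ (∫⁻ t' in Ici s, ENNReal.ofReal (Real.exp (-ρ * t'))) * c s := by
            refine mul_le_mul_left ?_ _
            rw [lintegral_indicator measurableSet_Ici, Measure.restrict_restrict measurableSet_Ici]
            exact lintegral_mono_set inter_subset_left
        _ = ENNReal.ofReal (Real.exp (-ρ * s) / ρ) * c s := by
            rw [← ofReal_integral_eq_lintegral_ofReal hexpint
              (Filter.Eventually.of_forall fun t' => (Real.exp_pos _).le),
              integral_Ici_eq_integral_Ioi, expIntegralIoi ρ s hρ]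
        _ = ENNReal.ofReal (1 / ρ) * ENNReal.ofReal (‖w s‖ ^ 2 * Real.exp (-2 * ρ * s)) := by
            rw [hc]
            simp only
            rw [← ENNReal.ofReal_mul (by positivity), ← ENNReal.ofReal_mul (by positivity)]
            congr 1
            have hee : Real.exp (-ρ * s) * Real.exp (-ρ * s) = Real.exp (-2 * ρ * s) := by
              rw [← Real.exp_add]
              congr 1
              ring
            rw [← hee]
            ring
    calc (∫⁻ t in S, ENNReal.ofReal
          (Real.exp (-ρ * t) * ∫ s in Ioc a t, ‖w s‖ ^ 2 * Real.exp (-ρ * s)))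
        = ∫⁻ t in S, ∫⁻ s in S, k t s := by
          refine setLIntegral_congr_fun hSmeas ?_
          exact fun t ht => hstep1 t ht
      _ = ∫⁻ s in S, ∫⁻ t in S, k t s := lintegral_lintegral_swap hkmeas
      _ ≤ ∫⁻ s in S, ENNReal.ofReal (1 / ρ) * ENNReal.ofReal (‖w s‖ ^ 2 * Real.exp (-2 * ρ * s)) := by
          refine lintegral_mono_ae ?_
          filter_upwards [ae_restrict_mem hSmeas] with s hs using hinner s hs
      _ = ENNReal.ofReal (1 / ρ) * J := by
          rw [hJ, lintegral_const_mul' _ _ ENNReal.ofReal_ne_top]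
  -- the main lintegral bound
  have hAbound : (∫⁻ t in S, ENNReal.ofReal (‖F t‖ ^ 2 * Real.exp (-2 * ρ * t)))
      ≤ ENNReal.ofReal (1 / ρ ^ 2) * J := by
    calc (∫⁻ t in S, ENNReal.ofReal (‖F t‖ ^ 2 * Real.exp (-2 * ρ * t)))
        ≤ ∫⁻ t in S, ENNReal.ofReal ((1 / ρ) *
            (Real.exp (-ρ * t) * ∫ s in Ioc a t, ‖w s‖ ^ 2 * Real.exp (-ρ * s))) := by
          refine lintegral_mono_ae ?_
          filter_upwards [ae_restrict_mem hSmeas] with t ht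
          exact ENNReal.ofReal_le_ofReal (hA t ht)
      _ = ENNReal.ofReal (1 / ρ) * ∫⁻ t in S, ENNReal.ofReal
            (Real.exp (-ρ * t) * ∫ s in Ioc a t, ‖w s‖ ^ 2 * Real.exp (-ρ * s)) := by
          rw [← lintegral_const_mul' _ _ ENNReal.ofReal_ne_top]
          exact lintegral_congr fun t => ENNReal.ofReal_mul (by positivity)
      _ ≤ ENNReal.ofReal (1 / ρ) * (ENNReal.ofReal (1 / ρ) * J) := mul_le_mul_right hTon _
      _ = ENNReal.ofReal (1 / ρ ^ 2) * J := by
          rw [← mul_assoc, ← ENNReal.ofReal_mul (by positivity)]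
          congr 2
          rw [div_mul_div_comm, one_mul, sq]
  have hJr : J = ENNReal.ofReal (∫ s in S, ‖v s‖ ^ 2 * Real.exp (-2 * ρ * s)) := by
    rw [hJ, ← ofReal_integral_eq_lintegral_ofReal hw_int_sq]
    · congr 1
      refine integral_congr_ae ?_
      filter_upwards [hw_ae] with s hs
      rw [hs]
    · filter_upwards with s
      positivity
  -- Part 1 : integrability
  have hFae : (fun t => ‖∫ s in Ioc a t, v s‖ ^ 2 * Real.exp (-2 * ρ * t))
      =ᵐ[volume.restrict S] (fun t => ‖F t‖ ^ 2 * Real.exp (-2 * ρ * t)) := by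
    filter_upwards [ae_restrict_mem hSmeas] with t ht
    rw [hFcongr t ht]
  have hFw_int : IntegrableOn (fun t => ‖F t‖ ^ 2 * Real.exp (-2 * ρ * t)) S := by
    constructor
    · refine AEMeasurable.aestronglyMeasurable ?_
      exact (hFmeas.norm.aemeasurable.pow_const 2).mul
        ((by fun_prop : Measurable fun t : ℝ => Real.exp (-2 * ρ * t)).aemeasurable)
    · rw [hasFiniteIntegral_iff_ofReal (Filter.Eventually.of_forall fun t => by positivity)]
      refine lt_of_le_of_lt hAbound ?_
      rw [hJr]
      exact ENNReal.mul_lt_top ENNReal.ofReal_lt_top ENNReal.ofReal_lt_top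
  have hint1 : IntegrableOn (fun t => ‖∫ s in Ioc a t, v s‖ ^ 2 * Real.exp (-2 * ρ * t)) S :=
    hFw_int.congr hFae.symm
  refine ⟨hint1, ?_, ?_⟩
  · -- Part 2 : distributional derivative
    intro φ hφ hφc hsupp
    have hφd : Differentiable ℝ φ := hφ.differentiable (by simp)
    have hφd_cont : Continuous (deriv φ) := hφ.continuous_deriv (by simp)
    have hRHS : (∫ t in S, φ t • v t) = ∫ t in S, φ t • w t := by
      refine integral_congr_ae ?_
      filter_upwards [hw_ae] with t ht
      rw [ht]
    have hLHS : (∫ t in S, deriv φ t • (∫ s in Ioc a t, v s)) = ∫ t in S, deriv φ t • F t := by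
      refine setIntegral_congr_fun hSmeas fun t ht => ?_
      rw [hFcongr t ht]
    rw [hLHS, hRHS]
    by_cases hK : tsupport φ = ∅
    · have hφ0 : ∀ t, φ t = 0 := fun t =>
        image_eq_zero_of_notMem_tsupport (by simp [hK])
      have hd0 : ∀ t, deriv φ t = 0 := fun t => by
        have : φ = fun _ => 0 := funext hφ0
        rw [this]
        simp
      simp [hφ0, hd0]
    have hKne : (tsupport φ).Nonempty := nonempty_iff_ne_empty.mpr hK
    have hKcomp : IsCompact (tsupport φ) := hφc
    set M0 := sSup (tsupport φ) with hM0
    have hM0K : M0 ∈ tsupport φ := hKcomp.sSup_mem hKne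
    have hM0S : M0 ∈ S := hsupp hM0K
    obtain ⟨ε, hε, hball⟩ := Metric.isOpen_iff.1 hSopen M0 hM0S
    set M := M0 + ε / 2 with hM
    have hM0M : M0 < M := by
      rw [hM]
      linarith
    have hMS : M ∈ S := by
      apply hball
      rw [Metric.mem_ball, Real.dist_eq, hM, show M0 + ε / 2 - M0 = ε / 2 by ring,
        abs_of_nonneg (by linarith)]
      linarith
    have hKle : ∀ x ∈ tsupport φ, x ≤ M0 := fun x hx => le_csSup hKcomp.bddAbove hx
    have hφM : φ M = 0 :=
      image_eq_zero_of_notMem_tsupport fun hMK => absurd (hKle M hMK) (by linarith)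
    set I := Ioc a M with hI
    have hKI : tsupport φ ⊆ I := fun x hx => ⟨hSsub x (hsupp hx), (hKle x hx).trans hM0M.le⟩
    have haM : a < M := hSsub M hMS
    haveI : IsFiniteMeasure (volume.restrict I) := by
      constructor
      rw [Measure.restrict_apply_univ, hI, Real.volume_Ioc]
      exact ENNReal.ofReal_lt_top
    have hd_zero : ∀ t, t ∉ tsupport φ → deriv φ t = 0 := by
      intro t ht
      by_contra h
      exact ht (support_deriv_subset (by simpa [Function.mem_support] using h))
    have hφ_zero : ∀ t, t ∉ tsupport φ → φ t = 0 := fun t ht =>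
      image_eq_zero_of_notMem_tsupport ht
    have eS : (∫ t in S, deriv φ t • F t) = ∫ t, deriv φ t • F t :=
      setIntegral_eq_integral_of_forall_compl_eq_zero fun t ht => by
        rw [hd_zero t fun h => ht (hsupp h), zero_smul]
    have eI : (∫ t in I, deriv φ t • F t) = ∫ t, deriv φ t • F t :=
      setIntegral_eq_integral_of_forall_compl_eq_zero fun t ht => by
        rw [hd_zero t fun h => ht (hKI h), zero_smul]
    have eS' : (∫ s in S, φ s • w s) = ∫ s, φ s • w s :=
      setIntegral_eq_integral_of_forall_compl_eq_zero fun s hs => by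
        rw [hφ_zero s fun h => hs (hsupp h), zero_smul]
    have eI' : (∫ s in I, φ s • w s) = ∫ s, φ s • w s :=
      setIntegral_eq_integral_of_forall_compl_eq_zero fun s hs => by
        rw [hφ_zero s fun h => hs (hKI h), zero_smul]
    have hFI : ∀ t ∈ I, F t = ∫ s in I, (Iic t).indicator w s := by
      intro t ht
      rw [setIntegral_indicator measurableSet_Iic, hF]
      simp only
      have hset : Ioc a t = I ∩ Iic t := by
        ext s
        simp only [hI, mem_Ioc, mem_inter_iff, mem_Iic]
        constructor
        · rintro ⟨h1, h2⟩
          exact ⟨⟨h1, h2.trans ht.2⟩, h2⟩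
        · rintro ⟨⟨h1, _⟩, h2⟩
          exact ⟨h1, h2⟩
      rw [hset]
    set G : ℝ → ℝ → H := fun t s => deriv φ t • (Iic t).indicator w s with hG
    obtain ⟨C, hC⟩ := hφd_cont.bounded_above_of_compact_support hφc.deriv
    have hGaesm : AEStronglyMeasurable (Function.uncurry G)
        ((volume.restrict I).prod (volume.restrict I)) := by
      have huncurry : Function.uncurry G = fun p : ℝ × ℝ =>
          ({q : ℝ × ℝ | q.2 ≤ q.1}).indicator (fun q => deriv φ q.1 • w q.2) p := by
        funext p
        rcases p with ⟨t, s⟩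
        simp only [Function.uncurry, hG]
        by_cases h : s ≤ t
        · rw [indicator_of_mem (mem_Iic.mpr h), indicator_of_mem (by exact h)]
        · rw [indicator_of_notMem (by simpa using h), indicator_of_notMem (by simpa using h),
            smul_zero]
      rw [huncurry]
      refine StronglyMeasurable.aestronglyMeasurable ?_
      refine StronglyMeasurable.indicator ?_ (measurableSet_le measurable_snd measurable_fst)
      exact ((hφd_cont.comp continuous_fst).stronglyMeasurable).smul
        (hw_sm.comp_measurable measurable_snd)
    have hmaj : Integrable (fun p : ℝ × ℝ => C * ‖w p.2‖)
        ((volume.restrict I).prod (volume.restrict I)) := by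
      refine Integrable.const_mul ?_ C
      refine (integrable_prod_iff ?_).mpr ⟨?_, ?_⟩
      · exact ((hw_sm.comp_measurable measurable_snd).norm).aestronglyMeasurable
      · exact Filter.Eventually.of_forall fun x => (hL1loc M hMS).norm
      · have hconst : (fun x : ℝ => ∫ y in I, ‖‖w (x, y).2‖‖) = fun _ : ℝ => ∫ y in I, ‖‖w y‖‖ :=
          rfl
        rw [hconst]
        exact integrable_const _
    have hGint : Integrable (Function.uncurry G)
        ((volume.restrict I).prod (volume.restrict I)) := by
      refine hmaj.mono' hGaesm ?_
      refine Filter.Eventually.of_forall fun p => ?_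
      rcases p with ⟨t, s⟩
      simp only [Function.uncurry, hG]
      rw [norm_smul]
      refine mul_le_mul (by simpa using hC t) (norm_indicator_le_norm_self w s)
        (norm_nonneg _) ((norm_nonneg _).trans (hC 0))
    have e2 : (∫ t in I, deriv φ t • F t) = ∫ t in I, ∫ s in I, G t s := by
      refine setIntegral_congr_fun measurableSet_Ioc fun t ht => ?_
      rw [hFI t ht, ← integral_smul]
    have e3 : (∫ t in I, ∫ s in I, G t s) = ∫ s in I, ∫ t in I, G t s :=
      integral_integral_swap hGint
    have e4 : (∫ s in I, ∫ t in I, G t s) = ∫ s in I, (-φ s) • w s := by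
      refine setIntegral_congr_fun measurableSet_Ioc fun s hs => ?_
      have h1 : ∀ t' : ℝ, G t' s = ((Ici s).indicator (deriv φ) t') • w s := by
        intro t'
        rw [hG]
        simp only
        by_cases h : s ≤ t'
        · rw [indicator_of_mem (mem_Iic.mpr h), indicator_of_mem (mem_Ici.mpr h)]
        · rw [indicator_of_notMem (by simpa using h), indicator_of_notMem (by simpa using h),
            smul_zero, zero_smul]
      calc (∫ t in I, G t s) = ∫ t in I, ((Ici s).indicator (deriv φ) t) • w s := by
            simp only [h1]
        _ = (∫ t in I, (Ici s).indicator (deriv φ) t) • w s := integral_smul_const _ _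
        _ = (∫ t in I ∩ Ici s, deriv φ t) • w s := by
            rw [setIntegral_indicator measurableSet_Ici]
        _ = (∫ t in Icc s M, deriv φ t) • w s := by
            have hset2 : I ∩ Ici s = Icc s M := by
              ext t
              simp only [hI, mem_Ioc, mem_inter_iff, mem_Ici, mem_Icc]
              constructor
              · rintro ⟨⟨_, h2⟩, h3⟩
                exact ⟨h3, h2⟩
              · rintro ⟨h1, h2⟩
                exact ⟨⟨lt_of_lt_of_le hs.1 h1, h2⟩, h1⟩
            rw [hset2]
        _ = (∫ t in Ioc s M, deriv φ t) • w s := by rw [integral_Icc_eq_integral_Ioc]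
        _ = (∫ t in s..M, deriv φ t) • w s := by rw [intervalIntegral.integral_of_le hs.2]
        _ = (φ M - φ s) • w s := by
            rw [intervalIntegral.integral_deriv_eq_sub (fun x _ => hφd x)
              (hφd_cont.intervalIntegrable _ _)]
        _ = (-φ s) • w s := by rw [hφM, zero_sub]
    have e5 : (∫ s in I, (-φ s) • w s) = - ∫ s in I, φ s • w s := by
      simp only [neg_smul]
      exact integral_neg _
    calc (∫ t in S, deriv φ t • F t) = ∫ t in I, deriv φ t • F t := by rw [eS, eI]
      _ = - ∫ s in I, φ s • w s := by rw [e2, e3, e4, e5]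
      _ = - ∫ s in S, φ s • w s := by rw [eI', eS']
  · -- Part 3 : norm bound
    have hJrnn : 0 ≤ ∫ t in S, ‖v t‖ ^ 2 * Real.exp (-2 * ρ * t) :=
      setIntegral_nonneg hSmeas fun t _ => by positivity
    have hXle : (∫ t in S, ‖∫ s in Ioc a t, v s‖ ^ 2 * Real.exp (-2 * ρ * t))
        ≤ (1 / ρ ^ 2) * ∫ t in S, ‖v t‖ ^ 2 * Real.exp (-2 * ρ * t) := by
      have h1 : ENNReal.ofReal (∫ t in S, ‖∫ s in Ioc a t, v s‖ ^ 2 * Real.exp (-2 * ρ * t))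
          = ∫⁻ t in S, ENNReal.ofReal (‖F t‖ ^ 2 * Real.exp (-2 * ρ * t)) := by
        rw [ofReal_integral_eq_lintegral_ofReal hint1
          (Filter.Eventually.of_forall fun t => by positivity)]
        refine lintegral_congr_ae ?_
        filter_upwards [hFae] with t ht
        rw [ht]
      have h2 := hAbound
      rw [← h1, hJr, ← ENNReal.ofReal_mul (by positivity)] at h2
      exact (ENNReal.ofReal_le_ofReal_iff (mul_nonneg (by positivity) hJrnn)).mp h2
    linarith
end

section
/- Let H be a Hilbert space, ρ > 0, h > 0 and 0 < T ≤ ∞. For every u ∈ L_{2,ρ}(−h,T;H) one has ∫_0^T (∫_{−h}^0 ‖u(t+s)‖²_H ds) e^{−2ρt} dt ≤ (1/(2ρ)) ∫_{−h}^T ‖u(s)‖²_H e^{−2ρs} ds. In other words, the history operator Θ : L_{2,ρ}(−h,T;H) → L_{2,ρ}(0,T;L₂(−h,0;H)), u ↦ (t ↦ u_{(t)}), is a bounded linear operator with norm at most 1/√(2ρ). -/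
open MeasureTheory Set
open scoped ENNReal

lemma history_core
    {H : Type*} [NormedAddCommGroup H] [InnerProductSpace ℝ H] [CompleteSpace H]
    (ρ h : ℝ) (T : EReal) (hρ : 0 < ρ) (hh : 0 < h) (hT : 0 < T)
    (v : ℝ → H) (hv : StronglyMeasurable v)
    (hvi : IntegrableOn (fun s => ‖v s‖ ^ 2 * Real.exp (-2 * ρ * s))
      {s : ℝ | -h < s ∧ (s : EReal) < T}) :
    (∫ t in {t : ℝ | 0 < t ∧ (t : EReal) < T},
        (∫ s in Ioc (-h) 0, ‖v (t + s)‖ ^ 2) * Real.exp (-2 * ρ * t))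
      ≤ (1 / (2 * ρ)) *
        ∫ s in {s : ℝ | -h < s ∧ (s : EReal) < T}, ‖v s‖ ^ 2 * Real.exp (-2 * ρ * s) := by
  set A : Set ℝ := {s : ℝ | -h < s ∧ (s : EReal) < T} with hA
  set B : Set ℝ := {t : ℝ | 0 < t ∧ (t : EReal) < T} with hB
  have hAm : MeasurableSet A := by
    have : A = Ioi (-h) ∩ ((↑) : ℝ → EReal) ⁻¹' Iio T := rfl
    rw [this]
    exact measurableSet_Ioi.inter (measurable_coe_real_ereal measurableSet_Iio)
  have hBm : MeasurableSet B := by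
    have : B = Ioi (0:ℝ) ∩ ((↑) : ℝ → EReal) ⁻¹' Iio T := rfl
    rw [this]
    exact measurableSet_Ioi.inter (measurable_coe_real_ereal measurableSet_Iio)
  -- nonnegativity of RHS integral
  set R : ℝ := ∫ s in A, ‖v s‖ ^ 2 * Real.exp (-2 * ρ * s) with hRdef
  have hRnn : 0 ≤ R := integral_nonneg fun s => by positivity
  have hvnn : 0 ≤ᵐ[volume.restrict A] fun s => ‖v s‖ ^ 2 * Real.exp (-2 * ρ * s) :=
    Filter.Eventually.of_forall fun s => by positivity
  -- key ENNReal quantities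
  set f : ℝ → ℝ≥0∞ := fun r => ENNReal.ofReal (‖v r‖ ^ 2 * Real.exp (-2 * ρ * r)) with hf
  set I : ℝ≥0∞ := ∫⁻ r in A, f r with hIdef
  have hI : I = ENNReal.ofReal R := (ofReal_integral_eq_lintegral_ofReal hvi hvnn).symm
  have hIne : I ≠ ⊤ := by rw [hI]; exact ENNReal.ofReal_ne_top
  -- measurability helpers
  have hFmeas : Measurable fun r => ENNReal.ofReal (‖v r‖ ^ 2) :=
    ENNReal.measurable_ofReal.comp ((hv.norm.measurable).pow_const 2)
  have hfmeas : Measurable f :=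
    ENNReal.measurable_ofReal.comp (((hv.norm.measurable).pow_const 2).mul
      ((Real.measurable_exp.comp (measurable_const.mul measurable_id))))
  -- the main lintegral estimate
  set J : ℝ≥0∞ := ∫⁻ t in B, (∫⁻ s in Ioc (-h) 0, ENNReal.ofReal (‖v (t + s)‖ ^ 2)) *
      ENNReal.ofReal (Real.exp (-2 * ρ * t)) with hJdef
  have hJle : J ≤ ENNReal.ofReal (1 / (2 * ρ)) * I := by
    -- pull the constant inside
    have step1 : J = ∫⁻ t in B, ∫⁻ s in Ioc (-h) 0,
        ENNReal.ofReal (‖v (t + s)‖ ^ 2) * ENNReal.ofReal (Real.exp (-2 * ρ * t)) := by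
      refine lintegral_congr fun t => ?_
      exact (lintegral_mul_const' _ _ ENNReal.ofReal_ne_top).symm
    -- swap
    have hprodmeas : AEMeasurable (Function.uncurry fun t s =>
        ENNReal.ofReal (‖v (t + s)‖ ^ 2) * ENNReal.ofReal (Real.exp (-2 * ρ * t)))
        ((volume.restrict B).prod (volume.restrict (Ioc (-h) 0))) := by
      apply Measurable.aemeasurable
      apply Measurable.mul (f := fun p : ℝ × ℝ => ENNReal.ofReal (‖v (p.1 + p.2)‖ ^ 2))
        (g := fun p : ℝ × ℝ => ENNReal.ofReal (Real.exp (-2 * ρ * p.1)))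
      · exact hFmeas.comp (measurable_fst.add measurable_snd)
      · exact (ENNReal.measurable_ofReal.comp
          (Real.measurable_exp.comp (measurable_const.mul measurable_id))).comp measurable_fst
    have step2 : J = ∫⁻ s in Ioc (-h) 0, ∫⁻ t in B,
        ENNReal.ofReal (‖v (t + s)‖ ^ 2) * ENNReal.ofReal (Real.exp (-2 * ρ * t)) := by
      rw [step1]
      exact lintegral_lintegral_swap hprodmeas
    rw [step2]
    -- bound the inner integral for s ∈ Ioc (-h) 0
    have inner_le : ∀ s ∈ Ioc (-h) (0:ℝ),
        (∫⁻ t in B, ENNReal.ofReal (‖v (t + s)‖ ^ 2) * ENNReal.ofReal (Real.exp (-2 * ρ * t)))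
          ≤ ENNReal.ofReal (Real.exp (2 * ρ * s)) * I := by
      intro s hs
      have key : ∀ t : ℝ, ENNReal.ofReal (‖v (t + s)‖ ^ 2) * ENNReal.ofReal (Real.exp (-2 * ρ * t))
          = ENNReal.ofReal (Real.exp (2 * ρ * s)) * f (t + s) := by
        intro t
        rw [hf, ← ENNReal.ofReal_mul (by positivity), ← ENNReal.ofReal_mul (by positivity)]
        congr 1
        rw [show Real.exp (2*ρ*s) * (‖v (t+s)‖^2 * Real.exp (-2*ρ*(t+s)))
            = ‖v (t+s)‖^2 * (Real.exp (2*ρ*s) * Real.exp (-2*ρ*(t+s))) by ring,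
          ← Real.exp_add]
        ring_nf
      calc (∫⁻ t in B, ENNReal.ofReal (‖v (t + s)‖ ^ 2) * ENNReal.ofReal (Real.exp (-2 * ρ * t)))
          = ∫⁻ t in B, ENNReal.ofReal (Real.exp (2 * ρ * s)) * f (t + s) := by
            exact lintegral_congr fun t => key t
        _ = ENNReal.ofReal (Real.exp (2 * ρ * s)) * ∫⁻ t in B, f (t + s) :=
            lintegral_const_mul' _ _ ENNReal.ofReal_ne_top
        _ ≤ ENNReal.ofReal (Real.exp (2 * ρ * s)) * I := by
            gcongr
            have hsub : (∫⁻ t in B, f (t + s)) = ∫⁻ r in (fun t => t + s) '' B, f r :=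
              (measurePreserving_add_right volume s).setLIntegral_comp_emb
                (measurableEmbedding_addRight s) f B
            rw [hsub, hIdef]
            apply lintegral_mono_set
            rintro r ⟨t, ⟨ht0, htT⟩, rfl⟩
            refine ⟨?_, ?_⟩
            · show -h < t + s
              have := hs.1; linarith
            · show ((t + s : ℝ) : EReal) < T
              have hle : (t + s : ℝ) ≤ t := by have := hs.2; linarith
              exact lt_of_le_of_lt (EReal.coe_le_coe_iff.mpr hle) htT
    calc (∫⁻ s in Ioc (-h) 0, ∫⁻ t in B,
          ENNReal.ofReal (‖v (t + s)‖ ^ 2) * ENNReal.ofReal (Real.exp (-2 * ρ * t)))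
        ≤ ∫⁻ s in Ioc (-h) 0, ENNReal.ofReal (Real.exp (2 * ρ * s)) * I := by
          refine setLIntegral_mono' measurableSet_Ioc inner_le
      _ = (∫⁻ s in Ioc (-h) 0, ENNReal.ofReal (Real.exp (2 * ρ * s))) * I :=
          lintegral_mul_const' _ _ hIne
      _ ≤ ENNReal.ofReal (1 / (2 * ρ)) * I := by
          gcongr
          have hcont : IntegrableOn (fun s => Real.exp (2 * ρ * s)) (Ioc (-h) 0) :=
            (Real.continuous_exp.comp (continuous_const.mul continuous_id)).integrableOn_Ioc
          rw [← ofReal_integral_eq_lintegral_ofReal hcont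
            (Filter.Eventually.of_forall fun s => (Real.exp_pos _).le)]
          apply ENNReal.ofReal_le_ofReal
          have : (∫ s in Ioc (-h) 0, Real.exp (2 * ρ * s)) = ∫ x in (-h)..0, Real.exp (2*ρ*x) :=
            (intervalIntegral.integral_of_le (by linarith)).symm
          rw [this, intervalIntegral.integral_comp_mul_left (fun x => Real.exp x)
            (by positivity : 2*ρ ≠ 0), integral_exp, smul_eq_mul, one_div]
          have h2 : (0:ℝ) < (2*ρ)⁻¹ := by positivity
          have h3 : (0:ℝ) ≤ Real.exp (2*ρ*(-h)) := (Real.exp_pos _).le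
          calc (2*ρ)⁻¹ * (Real.exp (2*ρ*0) - Real.exp (2*ρ*(-h))) ≤ (2*ρ)⁻¹ * 1 := by
                rw [mul_zero, Real.exp_zero]; nlinarith
            _ = (2*ρ)⁻¹ := mul_one _
  have hJne : J ≠ ⊤ :=
    ne_top_of_le_ne_top (ENNReal.mul_ne_top ENNReal.ofReal_ne_top hIne) hJle
  -- now relate LHS Bochner integral to J
  set g : ℝ → ℝ := fun t => (∫ s in Ioc (-h) 0, ‖v (t + s)‖ ^ 2) * Real.exp (-2 * ρ * t) with hg
  have hgnn : ∀ t, 0 ≤ g t := by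
    intro t
    exact mul_nonneg (integral_nonneg fun s => by positivity) (Real.exp_pos _).le
  have hgle : ∀ t, ENNReal.ofReal (g t) ≤
      (∫⁻ s in Ioc (-h) 0, ENNReal.ofReal (‖v (t + s)‖ ^ 2)) *
        ENNReal.ofReal (Real.exp (-2 * ρ * t)) := by
    intro t
    rw [hg, ENNReal.ofReal_mul (integral_nonneg fun s => by positivity)]
    gcongr
    by_cases hint : IntegrableOn (fun s => ‖v (t + s)‖ ^ 2) (Ioc (-h) 0)
    · rw [ofReal_integral_eq_lintegral_ofReal hint
        (Filter.Eventually.of_forall fun s => by positivity)]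
    · rw [integral_undef hint]; simp
  by_cases hint : Integrable g (volume.restrict B)
  · have heq : (∫ t in B, g t) = (∫⁻ t in B, ENNReal.ofReal (g t)).toReal := by
      rw [integral_eq_lintegral_of_nonneg_ae (Filter.Eventually.of_forall hgnn)
        hint.aestronglyMeasurable]
    have hle2 : (∫⁻ t in B, ENNReal.ofReal (g t)) ≤ ENNReal.ofReal (1 / (2 * ρ) * R) := by
      calc (∫⁻ t in B, ENNReal.ofReal (g t)) ≤ J := lintegral_mono hgle
        _ ≤ ENNReal.ofReal (1 / (2 * ρ)) * I := hJle
        _ = ENNReal.ofReal (1 / (2 * ρ) * R) := by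
            rw [hI, ← ENNReal.ofReal_mul (by positivity)]
    calc (∫ t in B, g t) = (∫⁻ t in B, ENNReal.ofReal (g t)).toReal := heq
      _ ≤ 1 / (2 * ρ) * R := ENNReal.toReal_le_of_le_ofReal (by positivity) hle2
  · rw [integral_undef hint]
    positivity


/-- The history operator
`Θ : L_{2,ρ}(-h,T;H) → L_{2,ρ}(0,T;L₂(-h,0;H))`, `u ↦ (t ↦ u_{(t)})`, satisfies
`∫_0^T (∫_{-h}^0 ‖u(t+s)‖² ds) e^{-2ρt} dt ≤ (1/(2ρ)) ∫_{-h}^T ‖u(s)‖² e^{-2ρs} ds`,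
i.e. it is a bounded linear operator of norm at most `1/√(2ρ)`.
Here `0 < T ≤ ∞` is encoded as `T : EReal`. -/
theorem history_operator_bounded
    {H : Type*} [NormedAddCommGroup H] [InnerProductSpace ℝ H] [CompleteSpace H]
    (ρ h : ℝ) (T : EReal) (hρ : 0 < ρ) (hh : 0 < h) (hT : 0 < T)
    (u : ℝ → H)
    (hmeas : AEStronglyMeasurable u (volume.restrict {s : ℝ | -h < s ∧ (s : EReal) < T}))
    (hu : IntegrableOn (fun s => ‖u s‖ ^ 2 * Real.exp (-2 * ρ * s))
      {s : ℝ | -h < s ∧ (s : EReal) < T}) :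
    (∫ t in {t : ℝ | 0 < t ∧ (t : EReal) < T},
        (∫ s in Ioc (-h) 0, ‖u (t + s)‖ ^ 2) * Real.exp (-2 * ρ * t))
      ≤ (1 / (2 * ρ)) *
        ∫ s in {s : ℝ | -h < s ∧ (s : EReal) < T}, ‖u s‖ ^ 2 * Real.exp (-2 * ρ * s) := by
  set A : Set ℝ := {s : ℝ | -h < s ∧ (s : EReal) < T} with hA
  set B : Set ℝ := {t : ℝ | 0 < t ∧ (t : EReal) < T} with hB
  have hBm : MeasurableSet B := by
    have : B = Ioi (0:ℝ) ∩ ((↑) : ℝ → EReal) ⁻¹' Iio T := rfl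
    rw [this]
    exact measurableSet_Ioi.inter (measurable_coe_real_ereal measurableSet_Iio)
  set v : ℝ → H := hmeas.mk u with hvdef
  have hv : StronglyMeasurable v := hmeas.stronglyMeasurable_mk
  have huv : u =ᵐ[volume.restrict A] v := hmeas.ae_eq_mk
  have huv' : (fun s => ‖u s‖ ^ 2 * Real.exp (-2 * ρ * s))
      =ᵐ[volume.restrict A] (fun s => ‖v s‖ ^ 2 * Real.exp (-2 * ρ * s)) :=
    huv.mono fun x hx => by simp only []; rw [hx]
  have hvi : IntegrableOn (fun s => ‖v s‖ ^ 2 * Real.exp (-2 * ρ * s)) A := hu.congr huv'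
  -- measurable null superset of the disagreement set
  have hnull : volume {x : ℝ | ¬(x ∈ A → u x = v x)} = 0 := ae_iff.mp (ae_imp_of_ae_restrict huv)
  obtain ⟨M, hMsub, hMm, hM0⟩ := exists_measurable_superset_of_null hnull
  -- inner integrals agree for every t ∈ B
  have h2 : ∀ t ∈ B, (∫ s in Ioc (-h) 0, ‖u (t + s)‖ ^ 2) = ∫ s in Ioc (-h) 0, ‖v (t + s)‖ ^ 2 := by
    intro t ht
    apply integral_congr_ae
    have hpre : volume ((fun s => t + s) ⁻¹' M) = 0 := by
      rw [(measurePreserving_add_left volume t).measure_preimage hMm.nullMeasurableSet]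
      exact hM0
    have h1 : ∀ᵐ s ∂(volume : Measure ℝ), t + s ∉ M := measure_eq_zero_iff_ae_notMem.mp hpre
    filter_upwards [ae_restrict_of_ae h1, ae_restrict_mem measurableSet_Ioc] with s hsM hsmem
    have hmemA : t + s ∈ A := by
      refine ⟨?_, ?_⟩
      · have := hsmem.1; have := ht.1; show -h < t + s; linarith
      · have hle : (t + s : ℝ) ≤ t := by have := hsmem.2; linarith
        exact lt_of_le_of_lt (EReal.coe_le_coe_iff.mpr hle) ht.2
    have : u (t + s) = v (t + s) := by
      by_contra hne
      exact hsM (hMsub fun himp => hne (himp hmemA))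
    rw [this]
  calc (∫ t in B, (∫ s in Ioc (-h) 0, ‖u (t + s)‖ ^ 2) * Real.exp (-2 * ρ * t))
      = ∫ t in B, (∫ s in Ioc (-h) 0, ‖v (t + s)‖ ^ 2) * Real.exp (-2 * ρ * t) :=
        setIntegral_congr_fun hBm fun t ht => by rw [h2 t ht]
    _ ≤ (1 / (2 * ρ)) * ∫ s in A, ‖v s‖ ^ 2 * Real.exp (-2 * ρ * s) :=
        history_core ρ h T hρ hh hT v hv hvi
    _ = (1 / (2 * ρ)) * ∫ s in A, ‖u s‖ ^ 2 * Real.exp (-2 * ρ * s) := by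
        rw [integral_congr_ae huv']
end
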